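/- For a measurable vector field s : ℝ^d → ℝ^d define the target-domain conditional score matching loss L_target(s) := ∫ qₜ(x) ‖s(x) − ∇ log qₜ(x)‖² dx and the importance-weighted denoising score matching loss on the source L_source(s) := ∫∫ p₀(x₀) k(x | x₀) (w(x₀)/W) ‖s(x) − ∇ₓ log k(x | x₀)‖² dx₀ dx. Assume: for every x₀ the map x ↦ k(x | x₀) is differentiable with k(x | x₀) > 0 for all x; for Lebesgue-a.e. x, qₜ(x) > 0, qₜ is differentiable at x, and ∇qₜ(x) = ∫ q₀(x₀) ∇ₓk(x | x₀) dx₀ (differentiation under the integral sign); C₁ := ∫ qₜ(x) ‖∇ log qₜ(x)‖² dx < ∞ and C₂ := ∫∫ q₀(x₀) k(x | x₀) ‖∇ₓ log k(x | x₀)‖² dx₀ dx < ∞. Then for every measurable s with ∫ qₜ(x) ‖s(x)‖² dx < ∞ one has L_target(s) − L_source(s) = C₁ − C₂. In particular the difference of the two objectives is a constant independent of s, so conditional score matching on the reweighted target domain and importance-weighted denoising score matching on the source domain have exactly the same minimizers. -/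

import Mathlib

/-!
Expanding the squares, both losses are `∫ qₜ ‖s‖² - 2 ∫ qₜ ⟪s, ·⟫ + const`. The quadratic terms
agree because `∫ q₀ k dx₀ = qₜ`, and the cross terms agree by the score identity
`qₜ ∇ log qₜ = ∇ qₜ = ∫ q₀ ∇ₓ k dx₀ = ∫ q₀ k ∇ₓ log k dx₀`, so only the constants `C₁`, `C₂` remain.
-/

open MeasureTheory Filter

noncomputable section

/-- `Vec d` is `ℝ^d`, equipped with Lebesgue measure. -/
abbrev Vec (d : ℕ) := EuclideanSpace ℝ (Fin d)

variable {d : ℕ}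

/-- The normalizing constant `W = ∫ p₀(x₀) w(x₀) dx₀`. -/
def Wconst (p₀ w : Vec d → ℝ) : ℝ :=
  ∫ x₀, p₀ x₀ * w x₀

/-- The reweighted density `q₀(x₀) = p₀(x₀) w(x₀) / W`. -/
def q0 (p₀ w : Vec d → ℝ) (x₀ : Vec d) : ℝ :=
  p₀ x₀ * w x₀ / Wconst p₀ w

/-- The reweighted noised marginal `qₜ(x) = ∫ k(x | x₀) q₀(x₀) dx₀`. -/
def qT (k : Vec d → Vec d → ℝ) (p₀ w : Vec d → ℝ) (x : Vec d) : ℝ :=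
  ∫ x₀, k x x₀ * q0 p₀ w x₀

/-- `∇ₓ log k(x | x₀)`: the gradient of `y ↦ log k(y | x₀)` at `x`. -/
def gradLogK (k : Vec d → Vec d → ℝ) (x x₀ : Vec d) : Vec d :=
  gradient (fun y => Real.log (k y x₀)) x

/-- The score of the reweighted noised marginal, `∇ log qₜ(x)`. -/
def scoreQT (k : Vec d → Vec d → ℝ) (p₀ w : Vec d → ℝ) (x : Vec d) : Vec d :=
  gradient (fun y => Real.log (qT k p₀ w y)) x

/-- Target-domain conditional score matching loss
`L_target(s) = ∫ qₜ(x) ‖s(x) − ∇ log qₜ(x)‖² dx`. -/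
def Ltarget (k : Vec d → Vec d → ℝ) (p₀ w : Vec d → ℝ) (s : Vec d → Vec d) : ℝ :=
  ∫ x, qT k p₀ w x * ‖s x - scoreQT k p₀ w x‖ ^ 2

/-- Importance-weighted denoising score matching loss on the source,
`L_source(s) = ∫∫ p₀(x₀) k(x | x₀) (w(x₀)/W) ‖s(x) − ∇ₓ log k(x | x₀)‖² dx₀ dx`. -/
def Lsource (k : Vec d → Vec d → ℝ) (p₀ w : Vec d → ℝ) (s : Vec d → Vec d) : ℝ :=
  ∫ x, ∫ x₀, p₀ x₀ * k x x₀ * (w x₀ / Wconst p₀ w) * ‖s x - gradLogK k x x₀‖ ^ 2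

open Topology RealInnerProductSpace

section Calculus

variable {E : Type*} [NormedAddCommGroup E]

theorem measurable_fderiv_apply_of_measurable_param [NormedSpace ℝ E]
    {α F : Type*} [MeasurableSpace α] [NormedAddCommGroup F] [NormedSpace ℝ F]
    [MeasurableSpace F] [BorelSpace F] [SecondCountableTopology F] {f : α → E → F} {x : E}
    (hf : ∀ y, Measurable fun a => f a y) (hd : ∀ a, DifferentiableAt ℝ (f a) x) (v : E) :
    Measurable fun a => fderiv ℝ (f a) x v := by
  -- a pointwise limit of difference quotients along `t = 1/n`, each measurable in `a`
  have hseq : Tendsto (fun n : ℕ => (n : ℝ)⁻¹) atTop (𝓝[≠] 0) :=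
    (tendsto_inv_atTop_nhdsGT_zero.comp tendsto_natCast_atTop_atTop).mono_right
      (nhdsWithin_mono _ fun t ht => ne_of_gt ht)
  refine measurable_of_tendsto_metrizable
    (f := fun n a => slope (fun t : ℝ => f a (x + t • v)) 0 (n : ℝ)⁻¹) (fun n => ?_)
    (tendsto_pi_nhds.2 fun a =>
      (hasDerivAt_iff_tendsto_slope.1 ((hd a).hasFDerivAt.hasLineDerivAt v)).comp hseq)
  simp only [slope_def_module]
  exact measurable_const.smul ((hf _).sub (hf _))

variable [InnerProductSpace ℝ E]

theorem measurable_gradient_of_measurable_param [FiniteDimensional ℝ E] [MeasurableSpace E]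
    [BorelSpace E] {α : Type*} [MeasurableSpace α] {f : α → E → ℝ} {x : E}
    (hf : ∀ y, Measurable fun a => f a y) (hd : ∀ a, DifferentiableAt ℝ (f a) x) :
    Measurable fun a => gradient (f a) x := by
  let b := stdOrthonormalBasis ℝ E
  have hsum : ∀ a, gradient (f a) x = ∑ i, fderiv ℝ (f a) x (b i) • b i := fun a => by
    conv_lhs => rw [← b.sum_repr' (gradient (f a) x)]
    refine Finset.sum_congr rfl fun i _ => ?_
    rw [real_inner_comm, gradient, InnerProductSpace.toDual_symm_apply]
  simp only [hsum]
  exact Finset.measurable_sum _ fun i _ =>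
    (measurable_fderiv_apply_of_measurable_param hf hd _).smul_const _

theorem measurable_gradient [FiniteDimensional ℝ E] [MeasurableSpace E] [BorelSpace E]
    (f : E → ℝ) : Measurable (gradient f) :=
  (InnerProductSpace.toDual ℝ E).symm.continuous.measurable.comp (measurable_fderiv ℝ f)

theorem gradient_log_comp [CompleteSpace E] {f : E → ℝ} {x : E} (hf : DifferentiableAt ℝ f x)
    (hx : f x ≠ 0) : gradient (fun y => Real.log (f y)) x = (f x)⁻¹ • gradient f x := by
  rw [gradient, (hf.hasFDerivAt.log hx).fderiv, map_smul, gradient]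

end Calculus

section Integral

variable {α : Type*} [MeasurableSpace α] {μ : Measure α}

theorem integrable_of_norm_le_mul_mul {F : Type*} [NormedAddCommGroup F] {f : α → F}
    {q a b : α → ℝ} (hq : ∀ x, 0 ≤ q x) (ha : Integrable (fun x => q x * a x ^ 2) μ)
    (hb : Integrable (fun x => q x * b x ^ 2) μ) (hf : AEStronglyMeasurable f μ)
    (hle : ∀ x, ‖f x‖ ≤ q x * (a x * b x)) : Integrable f μ := by
  refine ((ha.add hb).div_const 2).mono' hf (Eventually.of_forall fun x => (hle x).trans ?_)
  -- weighted AM-GM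
  have := mul_nonneg (hq x) (sq_nonneg (a x - b x))
  simp only [Pi.add_apply]
  nlinarith

theorem integral_sub_two_mul_add {f g h : α → ℝ} (hf : Integrable f μ) (hg : Integrable g μ)
    (hh : Integrable h μ) :
    ∫ x, (f x - 2 * g x + h x) ∂μ = ∫ x, f x ∂μ - 2 * ∫ x, g x ∂μ + ∫ x, h x ∂μ := by
  have h2g : Integrable (fun x => 2 * g x) μ := hg.const_mul 2
  have hfg : Integrable (fun x => f x - 2 * g x) μ := hf.sub h2g
  rw [integral_add hfg hh, integral_sub hf h2g, integral_const_mul]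

theorem integral_mul_norm_sub_sq {E : Type*} [NormedAddCommGroup E] [InnerProductSpace ℝ E]
    {q : α → ℝ} {u v : α → E} (hu : Integrable (fun x => q x * ‖u x‖ ^ 2) μ)
    (huv : Integrable (fun x => q x * ⟪u x, v x⟫) μ)
    (hv : Integrable (fun x => q x * ‖v x‖ ^ 2) μ) :
    ∫ x, q x * ‖u x - v x‖ ^ 2 ∂μ = ∫ x, q x * ‖u x‖ ^ 2 ∂μ - 2 * ∫ x, q x * ⟪u x, v x⟫ ∂μ
      + ∫ x, q x * ‖v x‖ ^ 2 ∂μ := by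
  rw [← integral_sub_two_mul_add hu huv hv]
  congr 1 with x
  rw [norm_sub_sq_real]
  ring

end Integral

section ReweightedMarginal

variable {k : Vec d → Vec d → ℝ} {p₀ w : Vec d → ℝ}

theorem q0_nonneg (hp₀ : ∀ x₀, 0 ≤ p₀ x₀) (hw : ∀ x₀, 0 ≤ w x₀) (x₀ : Vec d) :
    0 ≤ q0 p₀ w x₀ :=
  div_nonneg (mul_nonneg (hp₀ x₀) (hw x₀))
    (integral_nonneg fun x₀ => mul_nonneg (hp₀ x₀) (hw x₀))

theorem measurable_q0 (hp₀ : Measurable p₀) (hw : Measurable w) : Measurable (q0 p₀ w) :=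
  (hp₀.mul hw).div_const _

theorem qT_nonneg (hk : ∀ y x₀, 0 ≤ k y x₀) (hp₀ : ∀ x₀, 0 ≤ p₀ x₀) (hw : ∀ x₀, 0 ≤ w x₀)
    (x : Vec d) : 0 ≤ qT k p₀ w x :=
  integral_nonneg fun x₀ => mul_nonneg (hk x x₀) (q0_nonneg hp₀ hw x₀)

theorem measurable_qT (hk : Measurable (Function.uncurry k)) (hp₀ : Measurable p₀)
    (hw : Measurable w) : Measurable (qT k p₀ w) :=
  (hk.mul ((measurable_q0 hp₀ hw).comp measurable_snd)).stronglyMeasurable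
    |>.integral_prod_right' |>.measurable

theorem Lsource_eq_integral_q0 (s : Vec d → Vec d) :
    Lsource k p₀ w s = ∫ x, ∫ x₀, q0 p₀ w x₀ * k x x₀ * ‖s x - gradLogK k x x₀‖ ^ 2 := by
  simp only [Lsource, q0]
  congr 1 with x
  congr 1 with x₀
  ring

theorem measurable_gradLogK (hk : Measurable (Function.uncurry k))
    (hk_diff : ∀ x₀, Differentiable ℝ (fun y => k y x₀)) (hk_pos : ∀ y x₀, 0 < k y x₀)
    (x : Vec d) : Measurable (gradLogK k x) :=
  measurable_gradient_of_measurable_param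
    (fun _ => (hk.comp measurable_prodMk_left).log)
    (fun x₀ => (hk_diff x₀ x).log (hk_pos x x₀).ne')

theorem smul_gradLogK (hk_diff : ∀ x₀, Differentiable ℝ (fun y => k y x₀))
    (hk_pos : ∀ y x₀, 0 < k y x₀) (x x₀ : Vec d) :
    k x x₀ • gradLogK k x x₀ = gradient (fun y => k y x₀) x := by
  rw [gradLogK, gradient_log_comp (hk_diff x₀ x) (hk_pos x x₀).ne',
    smul_inv_smul₀ (hk_pos x x₀).ne']

theorem qT_smul_scoreQT (hk_diff : ∀ x₀, Differentiable ℝ (fun y => k y x₀))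
    (hk_pos : ∀ y x₀, 0 < k y x₀) {x : Vec d} (hpos : 0 < qT k p₀ w x)
    (hdiff : DifferentiableAt ℝ (qT k p₀ w) x)
    (hgrad : gradient (qT k p₀ w) x = ∫ x₀, q0 p₀ w x₀ • gradient (fun y => k y x₀) x) :
    qT k p₀ w x • scoreQT k p₀ w x = ∫ x₀, (q0 p₀ w x₀ * k x x₀) • gradLogK k x x₀ := by
  simp only [scoreQT, gradient_log_comp hdiff hpos.ne', smul_inv_smul₀ hpos.ne', hgrad, mul_smul,
    smul_gradLogK hk_diff hk_pos]

theorem integral_q0_mul_norm_sub_gradLogK_sq (hk : Measurable (Function.uncurry k))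
    (hk_diff : ∀ x₀, Differentiable ℝ (fun y => k y x₀)) (hk_pos : ∀ y x₀, 0 < k y x₀)
    (hp₀_nonneg : ∀ x₀, 0 ≤ p₀ x₀) (hw_nonneg : ∀ x₀, 0 ≤ w x₀) {x : Vec d}
    (hpos : 0 < qT k p₀ w x) (hdiff : DifferentiableAt ℝ (qT k p₀ w) x)
    (hgrad : gradient (qT k p₀ w) x = ∫ x₀, q0 p₀ w x₀ • gradient (fun y => k y x₀) x)
    (hC₂ : Integrable fun x₀ => q0 p₀ w x₀ * k x x₀ * ‖gradLogK k x x₀‖ ^ 2) (v : Vec d) :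
    ∫ x₀, q0 p₀ w x₀ * k x x₀ * ‖v - gradLogK k x x₀‖ ^ 2
      = qT k p₀ w x * ‖v‖ ^ 2 - 2 * (qT k p₀ w x * ⟪v, scoreQT k p₀ w x⟫)
        + ∫ x₀, q0 p₀ w x₀ * k x x₀ * ‖gradLogK k x x₀‖ ^ 2 := by
  have hweight : ∀ x₀, 0 ≤ q0 p₀ w x₀ * k x x₀ := fun x₀ =>
    mul_nonneg (q0_nonneg hp₀_nonneg hw_nonneg x₀) (hk_pos x x₀).le
  have hqT : qT k p₀ w x = ∫ x₀, q0 p₀ w x₀ * k x x₀ := by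
    simp only [qT, mul_comm]
  -- a non-integrable integrand would give the junk value `qₜ(x) = 0`
  have hmass : Integrable fun x₀ => q0 p₀ w x₀ * k x x₀ :=
    .of_integral_ne_zero (hqT ▸ hpos.ne')
  have hsmul : Integrable fun x₀ => (q0 p₀ w x₀ * k x x₀) • gradLogK k x x₀ :=
    integrable_of_norm_le_mul_mul (a := fun _ => 1) hweight (by simpa using hmass) hC₂
      (hmass.aestronglyMeasurable.smul
        (measurable_gradLogK hk hk_diff hk_pos x).aestronglyMeasurable)
      fun x₀ => by rw [norm_smul, Real.norm_of_nonneg (hweight x₀), one_mul]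
  have hcross : ∫ x₀, q0 p₀ w x₀ * k x x₀ * ⟪v, gradLogK k x x₀⟫
      = qT k p₀ w x * ⟪v, scoreQT k p₀ w x⟫ := by
    simp only [← real_inner_smul_right, integral_inner hsmul,
      ← qT_smul_scoreQT hk_diff hk_pos hpos hdiff hgrad]
  rw [integral_mul_norm_sub_sq (hmass.mul_const _) ?_ hC₂, integral_mul_const, ← hqT, hcross]
  simpa only [← real_inner_smul_right] using hsmul.const_inner v

end ReweightedMarginal

theorem target_score_matching_eq_importance_weighted_dsm_general
    (d : ℕ)
    -- `p₀` is a probability density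
    (p₀ : Vec d → ℝ) (hp₀_meas : Measurable p₀) (hp₀_nonneg : ∀ x₀, 0 ≤ p₀ x₀)
    -- `k` is a forward kernel: nonnegative, measurable, and a density in its first argument
    (k : Vec d → Vec d → ℝ) (hk_meas : Measurable (Function.uncurry k))
    -- weight `w ≥ 0` with `W` finite and positive
    (w : Vec d → ℝ) (hw_meas : Measurable w) (hw_nonneg : ∀ x₀, 0 ≤ w x₀)
    -- the kernel is everywhere differentiable and positive in its first argument
    (hk_diff : ∀ x₀, Differentiable ℝ (fun y => k y x₀))
    (hk_pos : ∀ y x₀, 0 < k y x₀)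
    -- a.e. positivity and differentiability (under the integral sign) of `qₜ`
    (hqt_ae : ∀ᵐ x, 0 < qT k p₀ w x ∧ DifferentiableAt ℝ (qT k p₀ w) x ∧
      gradient (qT k p₀ w) x = ∫ x₀, q0 p₀ w x₀ • gradient (fun y => k y x₀) x)
    -- `C₁ < ∞`
    (hC₁ : Integrable fun x => qT k p₀ w x * ‖scoreQT k p₀ w x‖ ^ 2)
    -- `C₂ < ∞`
    (hC₂ : Integrable (Function.uncurry
      fun x x₀ => q0 p₀ w x₀ * k x x₀ * ‖gradLogK k x x₀‖ ^ 2)) :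
    ∀ s : Vec d → Vec d, Measurable s →
      (Integrable fun x => qT k p₀ w x * ‖s x‖ ^ 2) →
      Ltarget k p₀ w s - Lsource k p₀ w s
        = (∫ x, qT k p₀ w x * ‖scoreQT k p₀ w x‖ ^ 2)
          - ∫ x, ∫ x₀, q0 p₀ w x₀ * k x x₀ * ‖gradLogK k x x₀‖ ^ 2 := by
  intro s hs_meas hs_int
  have hqT_nonneg := qT_nonneg (fun y x₀ => (hk_pos y x₀).le) hp₀_nonneg hw_nonneg
  have hcross : Integrable fun x => qT k p₀ w x * ⟪s x, scoreQT k p₀ w x⟫ :=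
    integrable_of_norm_le_mul_mul hqT_nonneg hs_int hC₁
      ((measurable_qT hk_meas hp₀_meas hw_meas).mul
        (hs_meas.inner (measurable_gradient _))).aestronglyMeasurable
      fun x => by
        rw [norm_mul, Real.norm_of_nonneg (hqT_nonneg x)]
        exact mul_le_mul_of_nonneg_left (norm_inner_le_norm _ _) (hqT_nonneg x)
  have hsource : (fun x => ∫ x₀, q0 p₀ w x₀ * k x x₀ * ‖s x - gradLogK k x x₀‖ ^ 2)
      =ᵐ[volume] fun x => qT k p₀ w x * ‖s x‖ ^ 2 - 2 * (qT k p₀ w x * ⟪s x, scoreQT k p₀ w x⟫)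
        + ∫ x₀, q0 p₀ w x₀ * k x x₀ * ‖gradLogK k x x₀‖ ^ 2 := by
    filter_upwards [hqt_ae, hC₂.prod_right_ae] with x ⟨hpos, hdiff, hgrad⟩ hx
    exact integral_q0_mul_norm_sub_gradLogK_sq hk_meas hk_diff hk_pos hp₀_nonneg hw_nonneg
      hpos hdiff hgrad hx (s x)
  have hC₂_outer : Integrable fun x => ∫ x₀, q0 p₀ w x₀ * k x x₀ * ‖gradLogK k x x₀‖ ^ 2 :=
    hC₂.integral_prod_left
  rw [Ltarget, Lsource_eq_integral_q0, integral_congr_ae hsource,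
    integral_mul_norm_sub_sq hs_int hcross hC₁, integral_sub_two_mul_add hs_int hcross hC₂_outer]
  ring

/-- Conditional score matching on the reweighted target domain and
importance-weighted denoising score matching on the source domain differ by a constant
independent of `s`, hence have the same minimizers. -/
theorem target_score_matching_eq_importance_weighted_dsm
    (d : ℕ) (hd : 1 ≤ d)
    -- `p₀` is a probability density
    (p₀ : Vec d → ℝ) (hp₀_meas : Measurable p₀) (hp₀_nonneg : ∀ x₀, 0 ≤ p₀ x₀)
    (hp₀_int : ∫ x₀, p₀ x₀ = 1)
    -- `k` is a forward kernel: nonnegative, measurable, and a density in its first argument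
    (k : Vec d → Vec d → ℝ) (hk_meas : Measurable (Function.uncurry k))
    (hk_nonneg : ∀ y x₀, 0 ≤ k y x₀) (hk_dens : ∀ x₀, ∫ y, k y x₀ = 1)
    -- weight `w ≥ 0` with `W` finite and positive
    (w : Vec d → ℝ) (hw_meas : Measurable w) (hw_nonneg : ∀ x₀, 0 ≤ w x₀)
    (hW_int : Integrable (fun x₀ => p₀ x₀ * w x₀))
    (hW_pos : 0 < Wconst p₀ w)
    -- the kernel is everywhere differentiable and positive in its first argument
    (hk_diff : ∀ x₀, Differentiable ℝ (fun y => k y x₀))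
    (hk_pos : ∀ y x₀, 0 < k y x₀)
    -- a.e. positivity and differentiability (under the integral sign) of `qₜ`
    (hqt_ae : ∀ᵐ x, 0 < qT k p₀ w x ∧ DifferentiableAt ℝ (qT k p₀ w) x ∧
      gradient (qT k p₀ w) x = ∫ x₀, q0 p₀ w x₀ • gradient (fun y => k y x₀) x)
    -- `C₁ < ∞`
    (hC₁ : Integrable fun x => qT k p₀ w x * ‖scoreQT k p₀ w x‖ ^ 2)
    -- `C₂ < ∞`
    (hC₂ : Integrable (Function.uncurry
      fun x x₀ => q0 p₀ w x₀ * k x x₀ * ‖gradLogK k x x₀‖ ^ 2)) :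
    ∀ s : Vec d → Vec d, Measurable s →
      (Integrable fun x => qT k p₀ w x * ‖s x‖ ^ 2) →
      Ltarget k p₀ w s - Lsource k p₀ w s
        = (∫ x, qT k p₀ w x * ‖scoreQT k p₀ w x‖ ^ 2)
          - ∫ x, ∫ x₀, q0 p₀ w x₀ * k x x₀ * ‖gradLogK k x x₀‖ ^ 2 :=
  target_score_matching_eq_importance_weighted_dsm_general d p₀ hp₀_meas hp₀_nonneg k hk_meas w
    hw_meas hw_nonneg hk_diff hk_pos hqt_ae hC₁ hC₂

end
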